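/- Let G be the group with presentation ⟨a, b | w^q a = b w^q⟩ where w = b a⁻¹ b⁻¹ a and q is a negative integer. Then the quotient of G by the normal closure of the element w^{-q} · b is the trivial group. -/

import Mathlib

/-!
In the quotient, the extra relator says `b = wᵠ`; substituting this into `wᵠ a = b wᵠ` gives
`a = wᵠ = b`, so `w = b b⁻¹ b⁻¹ b = 1` and therefore `a = b = 1`. As `a` and `b` generate,
the quotient is trivial.
-/

/-- The relator set of the twist knot group `⟨a, b | wᵠ a = b wᵠ⟩`,
where `a = of true`, `b = of false`, `w = b a⁻¹ b⁻¹ a`. -/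
def twistRels (q : ℤ) : Set (FreeGroup Bool) :=
  { (FreeGroup.of false * (FreeGroup.of true)⁻¹ * (FreeGroup.of false)⁻¹ *
      FreeGroup.of true) ^ q * FreeGroup.of true *
    (FreeGroup.of false *
      (FreeGroup.of false * (FreeGroup.of true)⁻¹ * (FreeGroup.of false)⁻¹ *
        FreeGroup.of true) ^ q)⁻¹ }

theorem eq_one_and_eq_one_of_twist_relations {G : Type*} [Group G] {a b : G} {q : ℤ}
    (hrel : (b * a⁻¹ * b⁻¹ * a) ^ q * a = b * (b * a⁻¹ * b⁻¹ * a) ^ q)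
    (hkill : (b * a⁻¹ * b⁻¹ * a) ^ (-q) * b = 1) :
    a = 1 ∧ b = 1 := by
  set w := b * a⁻¹ * b⁻¹ * a with hw
  have hb : w ^ q = b := by rwa [zpow_neg, inv_mul_eq_one] at hkill
  have hab : a = b := by
    rw [← hb] at hrel ⊢
    exact mul_left_cancel hrel
  have hw_one : w = 1 := by rw [hw, hab]; group
  have hb_one : b = 1 := by rw [← hb, hw_one, one_zpow]
  exact ⟨hab.trans hb_one, hb_one⟩

theorem twistRels_relation (q : ℤ) :
    (PresentedGroup.of false * (PresentedGroup.of true)⁻¹ * (PresentedGroup.of false)⁻¹ *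
        PresentedGroup.of true : PresentedGroup (twistRels q)) ^ q * PresentedGroup.of true =
      PresentedGroup.of false * (PresentedGroup.of false * (PresentedGroup.of true)⁻¹ *
        (PresentedGroup.of false)⁻¹ * PresentedGroup.of true) ^ q :=
  PresentedGroup.mk_eq_mk_of_mul_inv_mem rfl

theorem stmt_1_general (q : ℤ) :
    ∀ x : PresentedGroup (twistRels q) ⧸
      Subgroup.normalClosure
        {((PresentedGroup.of false * (PresentedGroup.of true)⁻¹ *
            (PresentedGroup.of false)⁻¹ * PresentedGroup.of true :
              PresentedGroup (twistRels q)) ^ (-q) * PresentedGroup.of false)},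
    x = 1 := by
  set N := Subgroup.normalClosure
    {((PresentedGroup.of false * (PresentedGroup.of true)⁻¹ *
        (PresentedGroup.of false)⁻¹ * PresentedGroup.of true :
          PresentedGroup (twistRels q)) ^ (-q) * PresentedGroup.of false)}
  let φ := QuotientGroup.mk' N
  set a := φ (PresentedGroup.of true)
  set b := φ (PresentedGroup.of false)
  have hkill : (b * a⁻¹ * b⁻¹ * a) ^ (-q) * b = 1 :=
    (QuotientGroup.eq_one_iff _).mpr (Subgroup.subset_normalClosure rfl)
  obtain ⟨ha, hb⟩ := eq_one_and_eq_one_of_twist_relations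
    (congrArg φ (twistRels_relation q)) hkill
  have hφ : φ = 1 := PresentedGroup.ext fun
    | true => ha
    | false => hb
  intro x
  obtain ⟨y, rfl⟩ := QuotientGroup.mk'_surjective N x
  exact DFunLike.congr_fun hφ y

theorem stmt_1 (q : ℤ) (hq : q < 0) :
    ∀ x : PresentedGroup (twistRels q) ⧸
      Subgroup.normalClosure
        {((PresentedGroup.of false * (PresentedGroup.of true)⁻¹ *
            (PresentedGroup.of false)⁻¹ * PresentedGroup.of true :
              PresentedGroup (twistRels q)) ^ (-q) * PresentedGroup.of false)},
    x = 1 :=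
  stmt_1_general q
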